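/- Assume the general counting-measure setup, and let Ψ be an approximation function and Q₂ > Q₁ ≥ 1 integers. If len*(J̃_Ψ(Q₁,Q₂)) = 0 then J_Ψ(Q₁,Q₂) = [0,1]. If δ ∈ (0,1) and 0 < len*(J̃_Ψ(Q₁,Q₂)) < ν_ρ(δ), then for every integer H ≥ 1, writing L = len*(J̃_Ψ(Q₁,Q₂)): 1 − μ_H(J_Ψ(Q₁,Q₂)) ≤ 4·∫_{J̃_Ψ(Q₁,Q₂)} ρ + T + 4·|J̃_Ψ(Q₁,Q₂)|·η_ρ(L), where T = (8δ/(1−δ) + E(H)/(L·min_{[0,1]} ρ))·(|J̃_Ψ(Q₁,Q₂)|·η_ρ(L) + ∫_{J̃_Ψ(Q₁,Q₂)} ρ) and |·| denotes Lebesgue measure. -/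

import Mathlib

open MeasureTheory Set

noncomputable section

def muH (X : ℕ → Finset ℝ) (H : ℕ) (A : Set ℝ) : ℝ :=
  (∑ α ∈ X H, Set.indicator A (fun _ => (1 : ℝ)) (Int.fract α)) / ((X H).card : ℝ)

def IsApproxFun (Ψ : ℝ → ℝ) : Prop :=
  (∀ x : ℝ, 0 < x → 0 < Ψ x) ∧ AntitoneOn Ψ (Set.Ioi 0) ∧
    Filter.Tendsto Ψ Filter.atTop (nhds 0)

def JPsi (Ψ : ℝ → ℝ) (Q₁ Q₂ : ℕ) : Set ℝ :=
  ⋃ q ∈ Finset.Ico Q₁ Q₂, ⋃ p ∈ Finset.range (q + 1),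
    Set.Icc ((p : ℝ) / q - Ψ q / q) ((p : ℝ) / q + Ψ q / q) ∩ Set.Icc 0 1

def JTilde (Ψ : ℝ → ℝ) (Q₁ Q₂ : ℕ) : Set ℝ :=
  closure (Set.Icc 0 1 \ JPsi Ψ Q₁ Q₂)

def lenStar (S : Set ℝ) : ℝ :=
  sInf ((fun x => (volume (connectedComponentIn S x)).toReal) '' S)

def etaMod (f : ℝ → ℝ) (ε : ℝ) : ℝ :=
  sInf {η : ℝ | 0 < η ∧ ∀ x ∈ Set.Icc (0 : ℝ) 1, ∀ y ∈ Set.Icc (0 : ℝ) 1,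
    |x - y| ≤ ε → |f x - f y| ≤ η}

def nuMod (f : ℝ → ℝ) (δ : ℝ) : ℝ :=
  sSup {ε : ℝ | 0 < ε ∧ etaMod f ε ≤ δ * sInf (f '' Set.Icc 0 1)}

/-! The points of `[0,1] \ J_Ψ(Q₁,Q₂)` lie in open gaps between consecutive endpoints of the
finitely many intervals defining `J_Ψ`, so `J̃_Ψ(Q₁,Q₂)` is a finite union of nondegenerate
closed intervals: it has finitely many components, each of positive length, which gives the
first claim. Each component `C` is a subinterval of `[0,1]`, so `μ_H(C) ≤ ∫_C ρ + E(H)`, while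
`∫_C ρ ≥ L · min ρ`; hence the number of components is at most `∫_{J̃} ρ / (L · min ρ)` and
`1 - μ_H(J_Ψ) ≤ μ_H(J̃) ≤ (1 + E(H) / (L · min ρ)) ∫_{J̃} ρ`, which is stronger than the
bound claimed. -/

lemma exists_gap_of_notMem {T : Finset ℝ} {u t₀ t₁ : ℝ} (hu : u ∉ T) (ht₀ : t₀ ∈ T)
    (ht₁ : t₁ ∈ T) (h₀ : t₀ ≤ u) (h₁ : u ≤ t₁) :
    ∃ a ∈ T, ∃ b ∈ T, u ∈ Ioo a b ∧ ∀ t ∈ T, t ∉ Ioo a b := by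
  classical
  have hne : ∀ t ∈ T, t ≠ u := fun t ht h => hu (h ▸ ht)
  have hbelow : (T.filter (· < u)).Nonempty :=
    ⟨t₀, Finset.mem_filter.2 ⟨ht₀, h₀.lt_of_ne (hne t₀ ht₀)⟩⟩
  have habove : (T.filter (u < ·)).Nonempty :=
    ⟨t₁, Finset.mem_filter.2 ⟨ht₁, h₁.lt_of_ne (hne t₁ ht₁).symm⟩⟩
  obtain ⟨haT, hau⟩ := Finset.mem_filter.1 (Finset.max'_mem _ hbelow)
  obtain ⟨hbT, hub⟩ := Finset.mem_filter.1 (Finset.min'_mem _ habove)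
  refine ⟨_, haT, _, hbT, ⟨hau, hub⟩, fun t ht ⟨hat, htb⟩ => ?_⟩
  rcases lt_trichotomy t u with htu | rfl | hut
  · exact hat.not_ge (Finset.le_max' _ t (Finset.mem_filter.2 ⟨ht, htu⟩))
  · exact hu ht
  · exact htb.not_ge (Finset.min'_le _ t (Finset.mem_filter.2 ⟨ht, hut⟩))

lemma mem_Icc_of_mem_Ioo_of_notMem_Ioo {a b l r u v : ℝ} (hl : l ∉ Ioo a b) (hr : r ∉ Ioo a b)
    (hu : u ∈ Ioo a b) (hv : v ∈ Ioo a b) (hul : u ∈ Icc l r) : v ∈ Icc l r := by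
  simp only [mem_Ioo, mem_Icc, not_and_or, not_lt] at *
  constructor <;> grind

lemma exists_finset_closure_eq_biUnion_Icc (T : Finset ℝ) {U : Set ℝ}
    (hU : ∀ u ∈ U, ∃ a ∈ T, ∃ b ∈ T, u ∈ Ioo a b ∧ Ioo a b ⊆ U) :
    ∃ P : Finset (ℝ × ℝ), (∀ p ∈ P, p.1 < p.2) ∧ closure U = ⋃ p ∈ P, Icc p.1 p.2 := by
  classical
  refine ⟨(T ×ˢ T).filter fun p => p.1 < p.2 ∧ Ioo p.1 p.2 ⊆ U,
    fun p hp => (Finset.mem_filter.1 hp).2.1, Subset.antisymm ?_ ?_⟩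
  · refine closure_minimal (fun u hu => ?_) (isClosed_biUnion_finset fun _ _ => isClosed_Icc)
    obtain ⟨a, ha, b, hb, hu, hab⟩ := hU u hu
    exact mem_biUnion (x := (a, b)) (by simp [ha, hb, hu.1.trans hu.2, hab])
      (Ioo_subset_Icc_self hu)
  · refine iUnion₂_subset fun p hp => ?_
    obtain ⟨-, hlt, hsub⟩ := Finset.mem_filter.1 hp
    rw [← closure_Ioo hlt.ne]
    exact closure_mono hsub

lemma exists_finset_closure_Icc_diff_eq_biUnion_Icc {ι : Type*} (x y : ℝ) (s : Finset ι)
    (l r : ι → ℝ) (hlr : ∀ i ∈ s, l i ≤ r i) (hx : ∃ i ∈ s, x ∈ Icc (l i) (r i))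
    (hy : ∃ i ∈ s, y ∈ Icc (l i) (r i)) :
    ∃ P : Finset (ℝ × ℝ), (∀ p ∈ P, p.1 < p.2) ∧
      closure (Icc x y \ ⋃ i ∈ s, Icc (l i) (r i)) = ⋃ p ∈ P, Icc p.1 p.2 := by
  classical
  set T : Finset ℝ := insert x (insert y (s.image l ∪ s.image r))
  apply exists_finset_closure_eq_biUnion_Icc T
  rintro u ⟨hxy, hJ⟩
  simp only [mem_iUnion, not_exists] at hJ
  have hlT : ∀ i ∈ s, l i ∈ T := fun i hi => by simp [T, Finset.mem_image_of_mem l hi]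
  have hrT : ∀ i ∈ s, r i ∈ T := fun i hi => by simp [T, Finset.mem_image_of_mem r hi]
  have huT : u ∉ T := by
    simp only [T, Finset.mem_insert, Finset.mem_union, Finset.mem_image]
    rintro (rfl | rfl | ⟨i, hi, rfl⟩ | ⟨i, hi, rfl⟩)
    · obtain ⟨i, hi, hxi⟩ := hx
      exact hJ i hi hxi
    · obtain ⟨i, hi, hyi⟩ := hy
      exact hJ i hi hyi
    · exact hJ i hi ⟨le_rfl, hlr i hi⟩
    · exact hJ i hi ⟨hlr i hi, le_rfl⟩
  obtain ⟨a, ha, b, hb, hu, hgap⟩ :=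
    exists_gap_of_notMem huT (by simp [T]) (by simp [T]) hxy.1 hxy.2
  refine ⟨a, ha, b, hb, hu, fun v hv => ⟨?_, ?_⟩⟩
  · exact mem_Icc_of_mem_Ioo_of_notMem_Ioo (hgap x (by simp [T])) (hgap y (by simp [T])) hu hv
      hxy
  · simp only [mem_iUnion, not_exists]
    intro i hi hvi
    exact hJ i hi (mem_Icc_of_mem_Ioo_of_notMem_Ioo (hgap _ (hlT i hi)) (hgap _ (hrT i hi))
      hv hu hvi)

lemma JPsi_subset_Icc (Ψ : ℝ → ℝ) (Q₁ Q₂ : ℕ) : JPsi Ψ Q₁ Q₂ ⊆ Icc 0 1 := by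
  simp only [JPsi, iUnion_subset_iff]
  exact fun _ _ _ _ => inter_subset_right

lemma Icc_diff_JPsi (Ψ : ℝ → ℝ) (Q₁ Q₂ : ℕ) :
    Icc 0 1 \ JPsi Ψ Q₁ Q₂ =
      Icc 0 1 \ ⋃ i ∈ (Finset.Ico Q₁ Q₂).sigma (fun q => Finset.range (q + 1)),
        Icc ((i.2 : ℝ) / i.1 - Ψ i.1 / i.1) ((i.2 : ℝ) / i.1 + Ψ i.1 / i.1) := by
  ext x
  simp only [JPsi, mem_sdiff, mem_iUnion, mem_inter_iff, Finset.mem_sigma, exists_prop,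
    Sigma.exists]
  grind

lemma exists_finset_JTilde_eq_biUnion_Icc {Ψ : ℝ → ℝ} (hΨ : ∀ x, 0 < x → 0 < Ψ x)
    {Q₁ Q₂ : ℕ} (hQ₁ : 1 ≤ Q₁) (hQ : Q₁ < Q₂) :
    ∃ P : Finset (ℝ × ℝ), (∀ p ∈ P, p.1 < p.2) ∧ JTilde Ψ Q₁ Q₂ = ⋃ p ∈ P, Icc p.1 p.2 := by
  have hw : ∀ q : ℕ, 1 ≤ q → 0 ≤ Ψ q / q := fun q hq =>
    div_nonneg (hΨ q (by exact_mod_cast hq)).le q.cast_nonneg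
  have hQ₁s : Q₁ ∈ Finset.Ico Q₁ Q₂ := Finset.mem_Ico.2 ⟨le_rfl, hQ⟩
  rw [JTilde, Icc_diff_JPsi]
  refine exists_finset_closure_Icc_diff_eq_biUnion_Icc _ _ _ _ _ (fun i hi => ?_)
    ⟨⟨Q₁, 0⟩, by simp [hQ₁s], ?_⟩ ⟨⟨Q₁, Q₁⟩, by simp [hQ₁s], ?_⟩
  · have := hw i.1 (hQ₁.trans (Finset.mem_Ico.1 (Finset.mem_sigma.1 hi).1).1)
    linarith
  · have := hw Q₁ hQ₁
    simp only [Nat.cast_zero, zero_div, mem_Icc]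
    constructor <;> linarith
  · have := hw Q₁ hQ₁
    rw [div_self (by positivity)]
    simp only [mem_Icc]
    constructor <;> linarith

section Components

variable {K : Set ℝ}

lemma biUnion_toFinset_connectedComponentIn (hfin : (connectedComponentIn K '' K).Finite) :
    ⋃ C ∈ hfin.toFinset, C = K := by
  simp only [Finite.mem_toFinset, biUnion_image]
  exact Subset.antisymm (iUnion₂_subset fun x _ => connectedComponentIn_subset K x)
    fun x hx => mem_biUnion hx (mem_connectedComponentIn hx)

lemma lenStar_le_toReal_volume {C : Set ℝ} (hC : C ∈ connectedComponentIn K '' K) :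
    lenStar K ≤ (volume C).toReal := by
  obtain ⟨x, hx, rfl⟩ := hC
  exact csInf_le ⟨0, by rintro _ ⟨_, _, rfl⟩; exact ENNReal.toReal_nonneg⟩ ⟨x, hx, rfl⟩

lemma integral_eq_sum_connectedComponentIn {ρ : ℝ → ℝ}
    (hfin : (connectedComponentIn K '' K).Finite) (hint : IntegrableOn ρ K) :
    ∫ x in K, ρ x = ∑ C ∈ hfin.toFinset, ∫ x in C, ρ x := by
  have hmem : ∀ C ∈ hfin.toFinset, ∃ x ∈ K, connectedComponentIn K x = C := fun C hC =>
    (Finite.mem_toFinset hfin).1 hC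
  conv_lhs => rw [← biUnion_toFinset_connectedComponentIn hfin]
  refine integral_biUnion_finset _ (fun C hC => ?_) (fun C hC C' hC' hne => ?_) fun C hC => ?_
  · obtain ⟨x, -, rfl⟩ := hmem C hC
    exact isPreconnected_connectedComponentIn.ordConnected.measurableSet
  · obtain ⟨x, -, rfl⟩ := hmem C hC
    obtain ⟨x', -, rfl⟩ := hmem C' hC'
    refine disjoint_left.2 fun z hz hz' => hne ?_
    rw [connectedComponentIn_eq hz, connectedComponentIn_eq hz']
  · obtain ⟨x, -, rfl⟩ := hmem C hC
    exact hint.mono_set (connectedComponentIn_subset K x)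

variable {P : Finset (ℝ × ℝ)}

lemma exists_Icc_subset_connectedComponentIn (hK : K = ⋃ p ∈ P, Icc p.1 p.2) {x : ℝ}
    (hx : x ∈ K) : ∃ p ∈ P, x ∈ Icc p.1 p.2 ∧ Icc p.1 p.2 ⊆ connectedComponentIn K x := by
  subst hK
  obtain ⟨p, hp, hxp⟩ := mem_iUnion₂.1 hx
  exact ⟨p, hp, hxp, isPreconnected_Icc.subset_connectedComponentIn hxp
    (Finset.subset_set_biUnion_of_mem (f := fun p : ℝ × ℝ => Icc p.1 p.2) hp)⟩

lemma finite_connectedComponentIn_image_of_eq_biUnion_Icc (hK : K = ⋃ p ∈ P, Icc p.1 p.2) :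
    (connectedComponentIn K '' K).Finite := by
  refine (P.finite_toSet.image fun p => connectedComponentIn K p.1).subset ?_
  rintro _ ⟨y, hy, rfl⟩
  obtain ⟨p, hp, hyp, hsub⟩ := exists_Icc_subset_connectedComponentIn hK hy
  exact ⟨p, hp, (connectedComponentIn_eq (hsub ⟨le_rfl, hyp.1.trans hyp.2⟩)).symm⟩

lemma toReal_volume_connectedComponentIn_pos (hP : ∀ p ∈ P, p.1 < p.2)
    (hK : K = ⋃ p ∈ P, Icc p.1 p.2) {x : ℝ} (hx : x ∈ K) :
    0 < (volume (connectedComponentIn K x)).toReal := by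
  have hKb : Bornology.IsBounded K :=
    hK ▸ (Bornology.isBounded_biUnion_finset P).2 fun p _ => Metric.isBounded_Icc p.1 p.2
  obtain ⟨p, hp, -, hsub⟩ := exists_Icc_subset_connectedComponentIn hK hx
  refine ENNReal.toReal_pos (ne_of_gt ?_)
    (hKb.subset (connectedComponentIn_subset K x)).measure_lt_top.ne
  calc (0 : ENNReal) < volume (Icc p.1 p.2) := by simpa using hP p hp
    _ ≤ _ := measure_mono hsub

lemma lenStar_pos_of_eq_biUnion_Icc (hP : ∀ p ∈ P, p.1 < p.2) (hK : K = ⋃ p ∈ P, Icc p.1 p.2)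
    (hne : K.Nonempty) : 0 < lenStar K := by
  have hfin : ((fun x => (volume (connectedComponentIn K x)).toReal) '' K).Finite := by
    rw [← image_image (fun C => (volume C).toReal)]
    exact (finite_connectedComponentIn_image_of_eq_biUnion_Icc hK).image _
  obtain ⟨x, hx, hxL⟩ := (hne.image _).csInf_mem hfin
  rw [lenStar, ← hxL]
  exact toReal_volume_connectedComponentIn_pos hP hK hx

end Components

section Counting

variable {X : ℕ → Finset ℝ} {H : ℕ}

lemma muH_mono {A B : Set ℝ} (h : A ⊆ B) : muH X H A ≤ muH X H B := by
  unfold muH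
  gcongr

lemma muH_biUnion_le {ι : Type*} (s : Finset ι) (A : ι → Set ℝ) :
    muH X H (⋃ i ∈ s, A i) ≤ ∑ i ∈ s, muH X H (A i) := by
  have hpt : ∀ x, (⋃ i ∈ s, A i).indicator (fun _ => (1 : ℝ)) x ≤
      ∑ i ∈ s, (A i).indicator (fun _ => (1 : ℝ)) x := by
    intro x
    by_cases hx : x ∈ ⋃ i ∈ s, A i
    · obtain ⟨i, hi, hxi⟩ := mem_iUnion₂.1 hx
      rw [indicator_of_mem hx]
      calc (1 : ℝ) = (A i).indicator (fun _ => (1 : ℝ)) x :=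
            (indicator_of_mem hxi (fun _ => (1 : ℝ))).symm
        _ ≤ _ := Finset.single_le_sum (f := fun i => (A i).indicator (fun _ => (1 : ℝ)) x)
          (fun _ _ => indicator_nonneg (fun _ _ => zero_le_one) _) hi
    · rw [indicator_of_notMem hx]
      exact Finset.sum_nonneg fun _ _ => indicator_nonneg (fun _ _ => zero_le_one) _
  unfold muH
  rw [← Finset.sum_div, Finset.sum_comm]
  gcongr with α
  exact hpt _

lemma one_sub_muH_le (hX : (X H).Nonempty) (A : Set ℝ) :
    1 - muH X H A ≤ muH X H (Icc 0 1 \ A) := by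
  have hcard : (0 : ℝ) < (X H).card := by exact_mod_cast hX.card_pos
  have hpt : ∀ α : ℝ, 1 ≤ A.indicator (fun _ => (1 : ℝ)) (Int.fract α) +
      (Icc 0 1 \ A).indicator (fun _ => (1 : ℝ)) (Int.fract α) := by
    intro α
    have hfract : Int.fract α ∈ Icc (0 : ℝ) 1 := ⟨Int.fract_nonneg α, (Int.fract_lt_one α).le⟩
    by_cases h : Int.fract α ∈ A
    · simp [h]
    · simp [h, hfract]
  have hsum : ((X H).card : ℝ) ≤ ∑ α ∈ X H, (A.indicator (fun _ => (1 : ℝ)) (Int.fract α) +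
      (Icc 0 1 \ A).indicator (fun _ => (1 : ℝ)) (Int.fract α)) := by
    simpa using Finset.sum_le_sum fun α (_ : α ∈ X H) => hpt α
  rw [Finset.sum_add_distrib] at hsum
  unfold muH
  rw [sub_le_iff_le_add, ← add_div, le_div_iff₀ hcard, one_mul]
  linarith

end Counting

section Discrepancy

variable {X : ℕ → Finset ℝ} {H : ℕ} {K : Set ℝ} {ρ : ℝ → ℝ}

lemma muH_le_integral_add_card_mul (hfin : (connectedComponentIn K '' K).Finite)
    (hint : IntegrableOn ρ K) (hK : K ⊆ Icc 0 1) {e : ℝ}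
    (hE : ∀ I ⊆ Icc 0 1, I.OrdConnected → |muH X H I - ∫ x in I, ρ x| ≤ e) :
    muH X H K ≤ (∫ x in K, ρ x) + hfin.toFinset.card * e := by
  have hC : ∀ C ∈ hfin.toFinset, muH X H C ≤ (∫ x in C, ρ x) + e := by
    intro C hC
    obtain ⟨x, -, rfl⟩ := (Finite.mem_toFinset hfin).1 hC
    have := hE _ ((connectedComponentIn_subset K x).trans hK)
      isPreconnected_connectedComponentIn.ordConnected
    linarith [(abs_le.1 this).2]
  calc muH X H K = muH X H (⋃ C ∈ hfin.toFinset, C) := by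
        rw [biUnion_toFinset_connectedComponentIn hfin]
    _ ≤ ∑ C ∈ hfin.toFinset, muH X H C := muH_biUnion_le _ _
    _ ≤ ∑ C ∈ hfin.toFinset, ((∫ x in C, ρ x) + e) := Finset.sum_le_sum hC
    _ = _ := by
        rw [Finset.sum_add_distrib, ← integral_eq_sum_connectedComponentIn hfin hint,
          Finset.sum_const, nsmul_eq_mul]

lemma card_mul_lenStar_le_integral (hfin : (connectedComponentIn K '' K).Finite)
    (hint : IntegrableOn ρ K) (hKb : Bornology.IsBounded K) {m : ℝ} (hm : 0 ≤ m)
    (hmρ : ∀ x ∈ K, m ≤ ρ x) : hfin.toFinset.card * (m * lenStar K) ≤ ∫ x in K, ρ x := by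
  rw [integral_eq_sum_connectedComponentIn hfin hint, ← nsmul_eq_mul, ← Finset.sum_const]
  refine Finset.sum_le_sum fun C hC => ?_
  obtain ⟨x, hx, rfl⟩ := (Finite.mem_toFinset hfin).1 hC
  have hCK := connectedComponentIn_subset K x
  calc m * lenStar K ≤ m * (volume (connectedComponentIn K x)).toReal :=
        mul_le_mul_of_nonneg_left (lenStar_le_toReal_volume ⟨x, hx, rfl⟩) hm
    _ ≤ _ := setIntegral_ge_of_const_le_real
        isPreconnected_connectedComponentIn.ordConnected.measurableSet
        (hKb.subset hCK).measure_lt_top.ne (fun y hy => hmρ y (hCK hy)) (hint.mono_set hCK)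

lemma muH_le_one_add_div_mul_integral (hfin : (connectedComponentIn K '' K).Finite)
    (hint : IntegrableOn ρ K) (hK : K ⊆ Icc 0 1) (hL : 0 < lenStar K) {m : ℝ}
    (hm : 0 < m) (hmρ : ∀ x ∈ K, m ≤ ρ x) {e : ℝ} (he : 0 ≤ e)
    (hE : ∀ I ⊆ Icc 0 1, I.OrdConnected → |muH X H I - ∫ x in I, ρ x| ≤ e) :
    muH X H K ≤ (1 + e / (lenStar K * m)) * ∫ x in K, ρ x := by
  have hsum := muH_le_integral_add_card_mul hfin hint hK hE
  have hcount := card_mul_lenStar_le_integral hfin hint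
    ((Metric.isBounded_Icc 0 1).subset hK) hm.le hmρ
  have hcard : hfin.toFinset.card * e ≤ e / (lenStar K * m) * ∫ x in K, ρ x := by
    rw [div_mul_eq_mul_div, le_div_iff₀ (mul_pos hL hm)]
    nlinarith
  linarith

end Discrepancy

lemma IsCompact.sInf_image_pos {s : Set ℝ} {f : ℝ → ℝ} (hs : IsCompact s) (hne : s.Nonempty)
    (hf : ContinuousOn f s) (hpos : ∀ x ∈ s, 0 < f x) : 0 < sInf (f '' s) := by
  obtain ⟨x, hx, hfx⟩ := (hs.image_of_continuousOn hf).sInf_mem (hne.image f)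
  exact hfx ▸ hpos x hx

theorem stmt11_general
    (X : ℕ → Finset ℝ) (hX : ∀ H : ℕ, 1 ≤ H → (X H).Nonempty)
    (ρ : ℝ → ℝ) (hρc : ContinuousOn ρ (Set.Icc 0 1))
    (hρpos : ∀ x ∈ Set.Icc (0 : ℝ) 1, 0 < ρ x)
    (E : ℕ → ℝ) (hE0 : ∀ H, 0 ≤ E H)
    (hE : ∀ H : ℕ, 1 ≤ H → ∀ I : Set ℝ, I ⊆ Set.Icc 0 1 → I.OrdConnected →
      |muH X H I - ∫ x in I, ρ x| ≤ E H)
    (Ψ : ℝ → ℝ) (hΨ : IsApproxFun Ψ)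
    (Q₁ Q₂ : ℕ) (hQ₁ : 1 ≤ Q₁) (hQ : Q₁ < Q₂) :
    (lenStar (JTilde Ψ Q₁ Q₂) = 0 → JPsi Ψ Q₁ Q₂ = Set.Icc 0 1) ∧
    (∀ δ : ℝ, δ ∈ Set.Ioo (0 : ℝ) 1 →
      0 < lenStar (JTilde Ψ Q₁ Q₂) → lenStar (JTilde Ψ Q₁ Q₂) < nuMod ρ δ →
      ∀ H : ℕ, 1 ≤ H →
        1 - muH X H (JPsi Ψ Q₁ Q₂) ≤
          4 * (∫ x in JTilde Ψ Q₁ Q₂, ρ x) +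
          (8 * δ / (1 - δ) +
              E H / (lenStar (JTilde Ψ Q₁ Q₂) * sInf (ρ '' Set.Icc 0 1))) *
            ((volume (JTilde Ψ Q₁ Q₂)).toReal * etaMod ρ (lenStar (JTilde Ψ Q₁ Q₂)) +
              ∫ x in JTilde Ψ Q₁ Q₂, ρ x) +
          4 * (volume (JTilde Ψ Q₁ Q₂)).toReal * etaMod ρ (lenStar (JTilde Ψ Q₁ Q₂))) := by
  obtain ⟨P, hP, hKP⟩ := exists_finset_JTilde_eq_biUnion_Icc hΨ.1 hQ₁ hQ
  set K := JTilde Ψ Q₁ Q₂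
  set J := JPsi Ψ Q₁ Q₂
  have hK : K ⊆ Icc 0 1 := closure_minimal sdiff_subset isClosed_Icc
  refine ⟨fun hlen => ?_, fun δ hδ hL _ H hH => ?_⟩
  · refine (JPsi_subset_Icc Ψ Q₁ Q₂).antisymm fun x hx => by_contra fun hxJ => ?_
    have := lenStar_pos_of_eq_biUnion_Icc hP hKP ⟨x, subset_closure ⟨hx, hxJ⟩⟩
    linarith
  set m := sInf (ρ '' Icc 0 1)
  have hm : 0 < m := isCompact_Icc.sInf_image_pos (nonempty_Icc.2 zero_le_one) hρc hρpos
  have hmρ : ∀ x ∈ K, m ≤ ρ x := fun x hx =>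
    csInf_le (isCompact_Icc.image_of_continuousOn hρc).bddBelow ⟨x, hK hx, rfl⟩
  have hint : IntegrableOn ρ K :=
    (hρc.mono hK).integrableOn_compact (isCompact_Icc.of_isClosed_subset isClosed_closure hK)
  have hmain : 1 - muH X H J ≤ (1 + E H / (lenStar K * m)) * ∫ x in K, ρ x :=
    calc 1 - muH X H J ≤ muH X H (Icc 0 1 \ J) := one_sub_muH_le (hX H hH) _
      _ ≤ muH X H K := muH_mono subset_closure
      _ ≤ _ := muH_le_one_add_div_mul_integral
          (finite_connectedComponentIn_image_of_eq_biUnion_Icc hKP) hint hK hL hm hmρ (hE0 H)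
          (hE H hH)
  have hI : 0 ≤ ∫ x in K, ρ x :=
    setIntegral_nonneg isClosed_closure.measurableSet fun x hx => (hρpos x (hK hx)).le
  have hVη : 0 ≤ (volume K).toReal * etaMod ρ (lenStar K) :=
    mul_nonneg ENNReal.toReal_nonneg (Real.sInf_nonneg fun _ h => h.1.le)
  have hδ' : 0 ≤ 8 * δ / (1 - δ) := div_nonneg (by linarith [hδ.1]) (by linarith [hδ.2])
  have hEm : 0 ≤ E H / (lenStar K * m) := div_nonneg (hE0 H) (mul_pos hL hm).le
  nlinarith [mul_nonneg hδ' (add_nonneg hVη hI), mul_nonneg hEm hVη]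

theorem stmt11
    (X : ℕ → Finset ℝ) (hX : ∀ H : ℕ, 1 ≤ H → (X H).Nonempty)
    (ρ : ℝ → ℝ) (hρc : ContinuousOn ρ (Set.Icc 0 1))
    (hρpos : ∀ x ∈ Set.Icc (0 : ℝ) 1, 0 < ρ x)
    (hρ1 : (∫ x in (0 : ℝ)..1, ρ x) = 1)
    (E : ℕ → ℝ) (hE0 : ∀ H, 0 ≤ E H)
    (hE : ∀ H : ℕ, 1 ≤ H → ∀ I : Set ℝ, I ⊆ Set.Icc 0 1 → I.OrdConnected →
      |muH X H I - ∫ x in I, ρ x| ≤ E H)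
    (Ψ : ℝ → ℝ) (hΨ : IsApproxFun Ψ)
    (Q₁ Q₂ : ℕ) (hQ₁ : 1 ≤ Q₁) (hQ : Q₁ < Q₂) :
    (lenStar (JTilde Ψ Q₁ Q₂) = 0 → JPsi Ψ Q₁ Q₂ = Set.Icc 0 1) ∧
    (∀ δ : ℝ, δ ∈ Set.Ioo (0 : ℝ) 1 →
      0 < lenStar (JTilde Ψ Q₁ Q₂) → lenStar (JTilde Ψ Q₁ Q₂) < nuMod ρ δ →
      ∀ H : ℕ, 1 ≤ H →
        1 - muH X H (JPsi Ψ Q₁ Q₂) ≤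
          4 * (∫ x in JTilde Ψ Q₁ Q₂, ρ x) +
          (8 * δ / (1 - δ) +
              E H / (lenStar (JTilde Ψ Q₁ Q₂) * sInf (ρ '' Set.Icc 0 1))) *
            ((volume (JTilde Ψ Q₁ Q₂)).toReal * etaMod ρ (lenStar (JTilde Ψ Q₁ Q₂)) +
              ∫ x in JTilde Ψ Q₁ Q₂, ρ x) +
          4 * (volume (JTilde Ψ Q₁ Q₂)).toReal * etaMod ρ (lenStar (JTilde Ψ Q₁ Q₂))) :=
  stmt11_general X hX ρ hρc hρpos E hE0 hE Ψ hΨ Q₁ Q₂ hQ₁ hQ
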